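/- arXiv:2010.15160 — 8 statements merged into one kernel-verified Lean document; each statement's English description precedes it below -/
import Mathlib

section
/- Let p be an odd prime and d > 2 an integer with p not dividing d. Define S_v = {a ∈ Z/dZ : 0 < a < d/2} (identifying residues with their least positive representatives) and S_f = {a ∈ Z/dZ : d/2 < a < d}. If H is a subgroup of (Z/dZ)^× such that h·S_v = S_v for all h ∈ H, then H is trivial. -/
/-- Let p be an odd prime and d > 2 with p ∤ d. If H ≤ (Z/dZ)ˣ satisfies
h·S_v = S_v for all h ∈ H, where S_v = {a : 0 < a < d/2}, then H is trivial. -/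
theorem stmt0 (p d : ℕ) (hp : p.Prime) (hodd : Odd p) (hd : 2 < d) (hpd : ¬ p ∣ d)
    (H : Subgroup (ZMod d)ˣ)
    (hH : ∀ h ∈ H, (fun a : ZMod d => (h : ZMod d) * a) ''
        {a : ZMod d | 0 < a.val ∧ 2 * a.val < d} =
        {a : ZMod d | 0 < a.val ∧ 2 * a.val < d}) :
    H = ⊥ := by
  haveI : NeZero d := ⟨by omega⟩
  haveI : Fact (1 < d) := ⟨by omega⟩
  ext h
  simp only [Subgroup.mem_bot]
  constructor
  · intro hh
    have hs := hH h hh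
    have hmem1 : (h : ZMod d) ∈ {a : ZMod d | 0 < a.val ∧ 2 * a.val < d} := by
      rw [← hs]
      exact ⟨1, ⟨by rw [ZMod.val_one]; omega, by rw [ZMod.val_one]; omega⟩, mul_one _⟩
    obtain ⟨hm0, hm2⟩ := hmem1
    set m := ((h : (ZMod d)ˣ) : ZMod d).val with hm
    by_cases h1 : m = 1
    · apply Units.ext
      have hv : ((m : ℕ) : ZMod d) = (h : ZMod d) := ZMod.natCast_rightInverse _
      rw [h1] at hv
      simpa using hv.symm
    · exfalso
      have hm2' : 2 ≤ m := by omega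
      set q := d / (2 * m) with hq
      set r := d % (2 * m) with hr
      have hdr : 2 * m * q + r = d := Nat.div_add_mod d (2 * m)
      have hrlt : r < 2 * m := Nat.mod_lt _ (by omega)
      set M := m * q with hM
      have hMq : 2 * q ≤ M := Nat.mul_le_mul_right q hm2'
      have hdr' : 2 * M + r = d := by rw [hM, ← hdr]; ring
      set k := q + 1 with hk
      have hk2 : 2 * k < d := by omega
      have hmk : m * k = M + m := by rw [hk, hM]; ring
      have hmkd : m * k < d := by omega
      have hmk2 : d ≤ 2 * (m * k) := by omega
      have hamem : ((k : ℕ) : ZMod d) ∈ {a : ZMod d | 0 < a.val ∧ 2 * a.val < d} := by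
        constructor <;> rw [ZMod.val_natCast_of_lt (by omega)] <;> omega
      have hres : (h : ZMod d) * ((k : ℕ) : ZMod d) ∈
          {a : ZMod d | 0 < a.val ∧ 2 * a.val < d} := by
        rw [← hs]; exact ⟨_, hamem, rfl⟩
      have hcast : (h : ZMod d) * ((k : ℕ) : ZMod d) = ((m * k : ℕ) : ZMod d) := by
        push_cast
        rw [ZMod.natCast_rightInverse (h : ZMod d)]
      rw [hcast] at hres
      obtain ⟨-, h2⟩ := hres
      rw [ZMod.val_natCast_of_lt hmkd] at h2
      omega
  · intro he
    rw [he]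
    exact H.one_mem
end

section
/- Let d > 2 be an integer and p an odd prime not dividing d. Multiplication by p on Z/dZ exchanges the sets S_f = {a : d/2 < a < d} and S_v = {a : 0 < a < d/2} (i.e., p·S_f = S_v and p·S_v = S_f) if and only if p ≡ -1 (mod d). -/
/-- Multiplication by p exchanges S_f and S_v iff p ≡ -1 (mod d). -/
theorem stmt1 (p d : ℕ) (hp : p.Prime) (hodd : Odd p) (hd : 2 < d) (hpd : ¬ p ∣ d) :
    ((fun a : ZMod d => (p : ZMod d) * a) ''
        {a : ZMod d | d < 2 * a.val ∧ a.val < d} =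
        {a : ZMod d | 0 < a.val ∧ 2 * a.val < d} ∧
     (fun a : ZMod d => (p : ZMod d) * a) ''
        {a : ZMod d | 0 < a.val ∧ 2 * a.val < d} =
        {a : ZMod d | d < 2 * a.val ∧ a.val < d}) ↔
    (p : ZMod d) = -1 := by
  haveI : NeZero d := ⟨by omega⟩
  haveI : Fact (1 < d) := ⟨by omega⟩
  -- negation swaps the two sets
  have hneg : ∀ x : ZMod d, (d < 2 * (-x).val ∧ (-x).val < d) ↔ (0 < x.val ∧ 2 * x.val < d) := by
    intro x
    rw [ZMod.neg_val]
    by_cases hx : x = 0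
    · simp [hx]
    · have hvlt : x.val < d := ZMod.val_lt x
      have hvpos : 0 < x.val := by
        rcases Nat.eq_zero_or_pos x.val with h | h
        · exact absurd ((ZMod.val_eq_zero x).mp h) hx
        · exact h
      simp [hx]; omega
  have hneg2 : ∀ x : ZMod d, (0 < (-x).val ∧ 2 * (-x).val < d) ↔ (d < 2 * x.val ∧ x.val < d) := by
    intro x
    rw [ZMod.neg_val]
    by_cases hx : x = 0
    · simp [hx, ZMod.val_zero]
    · have hvlt : x.val < d := ZMod.val_lt x
      have hvpos : 0 < x.val := by
        rcases Nat.eq_zero_or_pos x.val with h | h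
        · exact absurd ((ZMod.val_eq_zero x).mp h) hx
        · exact h
      simp [hx]; omega
  constructor
  · rintro ⟨h1, h2⟩
    set q : ZMod d := -(p : ZMod d) with hq
    -- multiplication by q preserves S_v
    have hstep : ∀ x : ZMod d, (0 < x.val ∧ 2 * x.val < d) →
        (0 < (q * x).val ∧ 2 * (q * x).val < d) := by
      intro x hx
      have hmem : (p : ZMod d) * x ∈ {a : ZMod d | d < 2 * a.val ∧ a.val < d} := by
        rw [← h2]; exact ⟨x, hx, rfl⟩
      have : q * x = -((p : ZMod d) * x) := by rw [hq, neg_mul]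
      rw [this]
      exact (hneg2 _).mpr hmem
    have hone : (0 : ℕ) < (1 : ZMod d).val ∧ 2 * (1 : ZMod d).val < d := by
      rw [ZMod.val_one d]; omega
    have hqmem := hstep 1 hone
    rw [mul_one] at hqmem
    set m := q.val with hm
    have hqm : (m : ZMod d) = q := ZMod.natCast_zmod_val q
    rcases Nat.lt_or_ge m 2 with hm2 | hm2
    · -- m = 1, so q = 1, p = -1
      have hm1 : m = 1 := by omega
      have : q = 1 := by rw [← hqm, hm1, Nat.cast_one]
      have : -(p : ZMod d) = 1 := by rw [← hq]; exact this
      linear_combination -this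
    · -- m ≥ 2 : contradiction
      exfalso
      have hcop : Nat.Coprime p d := (Nat.Prime.coprime_iff_not_dvd hp).mpr hpd
      have hunit : IsUnit (p : ZMod d) := (ZMod.isUnit_iff_coprime p d).mpr hcop
      have hunitq : IsUnit ((m : ZMod d)) := by rw [hqm, hq]; exact hunit.neg
      have hcopm : Nat.Coprime m d := (ZMod.isUnit_iff_coprime m d).mp hunitq
      set K := d / (2 * m) with hK
      set M := m * K with hM
      have hdm : 2 * M + d % (2 * m) = d := by
        have h := Nat.div_add_mod d (2 * m)
        have h' : 2 * m * (d / (2 * m)) = 2 * M := by rw [hM, hK]; ring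
        omega
      have hr : d % (2 * m) < 2 * m := Nat.mod_lt d (by omega)
      have hrne : d % (2 * m) ≠ 0 := by
        intro h
        have hdvd : (2 * m) ∣ d := Nat.dvd_of_mod_eq_zero h
        have hmd : m ∣ d := dvd_trans ⟨2, by ring⟩ hdvd
        have : m ∣ 1 := Nat.dvd_gcd dvd_rfl hmd |>.trans (by rw [hcopm])
        have := Nat.dvd_one.mp this
        omega
      have h2K : 2 * K ≤ M := by rw [hM]; exact Nat.mul_le_mul_right K hm2
      set a : ℕ := K + 1 with ha
      -- arithmetic facts
      have hma : m * a = M + m := by rw [ha, hM]; ring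
      have key1 : d < 2 * (m * a) := by rw [hma]; omega
      have key2 : m * a < d := by rw [hma]; omega
      have h2a : 2 * a < d := by omega
      have halt : a < d := by omega
      have haval : ((a : ZMod d)).val = a := ZMod.val_cast_of_lt halt
      have hamem : 0 < ((a : ZMod d)).val ∧ 2 * ((a : ZMod d)).val < d := by
        rw [haval]; omega
      have := hstep (a : ZMod d) hamem
      have hqa : q * (a : ZMod d) = ((m * a : ℕ) : ZMod d) := by
        rw [← hqm, Nat.cast_mul]
      rw [hqa, ZMod.val_cast_of_lt key2] at this
      omega
  · intro hp1
    rw [hp1]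
    constructor
    · ext x
      simp only [Set.mem_image, Set.mem_setOf_eq]
      constructor
      · rintro ⟨b, hb, rfl⟩
        rw [neg_one_mul]
        exact (hneg2 b).mpr hb
      · intro hx
        exact ⟨-x, (hneg x).mpr hx, by rw [neg_one_mul, neg_neg]⟩
    · ext x
      simp only [Set.mem_image, Set.mem_setOf_eq]
      constructor
      · rintro ⟨b, hb, rfl⟩
        rw [neg_one_mul]
        exact (hneg b).mpr hb
      · intro hx
        exact ⟨-x, (hneg2 x).mpr hx, by rw [neg_one_mul, neg_neg]⟩
end

section
/- Let d > 2 be an integer and p an odd prime not dividing d. Multiplication by p on Z/dZ preserves the set S_v = {a : 0 < a < d/2} (i.e., p·S_v = S_v) if and only if p ≡ 1 (mod d). -/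
/-- Multiplication by p preserves S_v iff p ≡ 1 (mod d). -/
theorem stmt2 (p d : ℕ) (hp : p.Prime) (hodd : Odd p) (hd : 2 < d) (hpd : ¬ p ∣ d) :
    (fun a : ZMod d => (p : ZMod d) * a) ''
        {a : ZMod d | 0 < a.val ∧ 2 * a.val < d} =
        {a : ZMod d | 0 < a.val ∧ 2 * a.val < d} ↔
    (p : ZMod d) = 1 := by
  haveI : NeZero d := ⟨by omega⟩
  haveI : Fact (1 < d) := ⟨by omega⟩
  constructor
  · intro h
    have hsub : ∀ x : ZMod d, (0 < x.val ∧ 2 * x.val < d) →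
        0 < ((p : ZMod d) * x).val ∧ 2 * ((p : ZMod d) * x).val < d := by
      intro x hx
      have hmem : (p : ZMod d) * x ∈
          ((fun a : ZMod d => (p : ZMod d) * a) '' {a : ZMod d | 0 < a.val ∧ 2 * a.val < d}) :=
        ⟨x, hx, rfl⟩
      rw [h] at hmem
      exact hmem
    obtain ⟨m, hm⟩ : ∃ m, (p : ZMod d).val = m := ⟨_, rfl⟩
    have h1 : ((1 : ZMod d)).val = 1 := ZMod.val_one d
    have hm1 := hsub 1 (by rw [h1]; omega)
    rw [mul_one, hm] at hm1
    by_cases hm2 : m = 1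
    · have hv : ((p : ZMod d)).val = ((1 : ZMod d)).val := by rw [h1, hm, hm2]
      exact ZMod.val_injective d hv
    · exfalso
      have hm2' : 2 ≤ m := by omega
      obtain ⟨k, r, hdm, hmod⟩ : ∃ k r, 2 * m * k + r = d ∧ r < 2 * m :=
        ⟨d / (2 * m), d % (2 * m), Nat.div_add_mod d (2 * m), Nat.mod_lt d (by omega)⟩
      have h4k : 4 * k ≤ 2 * m * k := by nlinarith
      have hB : 2 * (m * (k + 1)) = 2 * m * k + 2 * m := by ring
      have hxlt : k + 1 < d := by omega
      have h2a : 2 * (k + 1) < d := by omega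
      have hxval : (((k + 1 : ℕ) : ZMod d)).val = k + 1 := ZMod.val_cast_of_lt hxlt
      have hc := hsub ((k + 1 : ℕ) : ZMod d) (by rw [hxval]; omega)
      have hvm : ((p : ZMod d) * ((k + 1 : ℕ) : ZMod d)).val = m * (k + 1) % d := by
        rw [ZMod.val_mul, hxval, hm]
      have hlt : m * (k + 1) < d := by omega
      rw [hvm, Nat.mod_eq_of_lt hlt] at hc
      omega
  · intro h
    rw [h]
    simp
end

section
/- Let p be an odd prime and suppose d > 2 satisfies d ≡ 1 (mod 2p) and p ∤ d. Then the sum over j = 1 to (p-1)/2 of (⌊2jd/(2p)⌋ - ⌊(2j-1)d/(2p)⌋) equals (p-1)(d-1)/(4p). -/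
/-- If d ≡ 1 (mod 2p) then the a-number sum equals (p-1)(d-1)/(4p). -/
theorem stmt5 (p d : ℕ) (hp : p.Prime) (hodd : Odd p) (hd : 2 < d)
    (hpd : ¬ p ∣ d) (hcong : d % (2 * p) = 1) :
    ∑ j ∈ Finset.Icc 1 ((p - 1) / 2), (2 * j * d / (2 * p) - (2 * j - 1) * d / (2 * p))
      = (p - 1) * (d - 1) / (4 * p) := by
  have hp2 : 2 ≤ p := hp.two_le
  obtain ⟨m, hm⟩ := hodd
  set k := d / (2 * p) with hk
  have hd' : d = 2 * p * k + 1 := by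
    conv_lhs => rw [← Nat.div_add_mod d (2 * p)]
    rw [hcong]
  have hpos : 0 < 2 * p := by omega
  have hsum : ∀ j ∈ Finset.Icc 1 ((p - 1) / 2),
      2 * j * d / (2 * p) - (2 * j - 1) * d / (2 * p) = k := by
    intro j hj
    simp only [Finset.mem_Icc] at hj
    obtain ⟨hj1, hj2⟩ := hj
    have hjm : j ≤ m := by omega
    have h2j : 2 * j < 2 * p := by omega
    have e1 : 2 * j * d = 2 * p * (2 * j * k) + 2 * j := by rw [hd']; ring
    have e2 : (2 * j - 1) * d = 2 * p * ((2 * j - 1) * k) + (2 * j - 1) := by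
      rw [hd']; ring
    rw [e1, e2, Nat.mul_add_div hpos, Nat.mul_add_div hpos,
      Nat.div_eq_of_lt h2j, Nat.div_eq_of_lt (by omega)]
    have h3 : (2 * j - 1) * k = 2 * j * k - 1 * k := by rw [Nat.sub_mul]
    have h4 : k ≤ 2 * j * k := Nat.le_mul_of_pos_left k (by omega)
    omega
  rw [Finset.sum_congr rfl hsum, Finset.sum_const, Nat.card_Icc]
  have hpm : (p - 1) / 2 = m := by omega
  have hrhs : (p - 1) * (d - 1) = 4 * p * (m * k) := by
    have h1 : p - 1 = 2 * m := by omega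
    have h2 : d - 1 = 2 * p * k := by omega
    rw [h1, h2]; ring
  rw [hrhs, Nat.mul_div_cancel_left _ (by omega : 0 < 4 * p), hpm]
  simp [Nat.mul_comm]
end

section
/- Let p be an odd prime and suppose d > 2 satisfies d ≡ -1 (mod 2p). Then the sum over j = 1 to (p-1)/2 of (⌊2jd/(2p)⌋ - ⌊(2j-1)d/(2p)⌋) equals (p-1)(d+1)/(4p). -/
/-- Helper: if d + 1 = 2pk and 1 ≤ i < 2p then ⌊i*d/(2p)⌋ = i*k - 1. -/
lemma stmt6_aux (p d k i : ℕ) (hk' : d + 1 = 2 * p * k) (hk1 : 1 ≤ k)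
    (hi1 : 1 ≤ i) (hi2 : i < 2 * p) : i * d / (2 * p) = i * k - 1 := by
  have h1 : i * d + i = i * k * (2 * p) := by
    calc i * d + i = i * (d + 1) := by ring
      _ = i * (2 * p * k) := by rw [hk']
      _ = i * k * (2 * p) := by ring
  have hik : 1 ≤ i * k := Nat.one_le_iff_ne_zero.mpr (by positivity)
  apply Nat.div_eq_of_lt_le
  · have h2 : (i * k - 1) * (2 * p) + 2 * p = i * k * (2 * p) := by
      calc (i * k - 1) * (2 * p) + 2 * p = ((i * k - 1) + 1) * (2 * p) := by ring
        _ = i * k * (2 * p) := by rw [Nat.sub_add_cancel hik]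
    linarith
  · have h3 : Nat.succ (i * k - 1) * (2 * p) = i * k * (2 * p) := by
      rw [Nat.succ_eq_add_one, Nat.sub_add_cancel hik]
    rw [h3]
    linarith

/-- If d ≡ -1 (mod 2p) then the a-number sum equals (p-1)(d+1)/(4p). -/
theorem stmt6 (p d : ℕ) (hp : p.Prime) (hodd : Odd p) (hd : 2 < d)
    (hcong : d % (2 * p) = 2 * p - 1) :
    ∑ j ∈ Finset.Icc 1 ((p - 1) / 2), (2 * j * d / (2 * p) - (2 * j - 1) * d / (2 * p))
      = (p - 1) * (d + 1) / (4 * p) := by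
  have hp2 : 2 ≤ p := hp.two_le
  have hdm := Nat.div_add_mod d (2 * p)
  rw [hcong] at hdm
  set k : ℕ := d / (2 * p) + 1 with hkdef
  have hsucc : (2 * p - 1) + 1 = 2 * p := by omega
  have hk' : d + 1 = 2 * p * k := by
    calc d + 1 = (2 * p * (d / (2 * p)) + (2 * p - 1)) + 1 := by rw [hdm]
      _ = 2 * p * (d / (2 * p)) + ((2 * p - 1) + 1) := by rw [add_assoc]
      _ = 2 * p * (d / (2 * p)) + 2 * p := by rw [hsucc]
      _ = 2 * p * k := by rw [hkdef]; ring
  have hk1 : 1 ≤ k := hkdef ▸ Nat.le_add_left 1 _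
  set m : ℕ := (p - 1) / 2 with hmdef
  have hpodd : p % 2 = 1 := Nat.odd_iff.mp hodd
  have hm : p - 1 = 2 * m := by omega
  have hterm : ∀ j ∈ Finset.Icc 1 m,
      2 * j * d / (2 * p) - (2 * j - 1) * d / (2 * p) = k := by
    intro j hj
    rw [Finset.mem_Icc] at hj
    obtain ⟨hj1, hj2⟩ := hj
    have hja : 2 * j * d / (2 * p) = 2 * j * k - 1 := by
      apply stmt6_aux p d k _ hk' hk1 (by omega) (by omega)
    have hjb : (2 * j - 1) * d / (2 * p) = (2 * j - 1) * k - 1 := by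
      apply stmt6_aux p d k _ hk' hk1 (by omega) (by omega)
    rw [hja, hjb]
    have h4 : (2 * j - 1) * k = 2 * j * k - k := by
      rw [Nat.sub_mul, one_mul]
    rw [h4]
    have hB : k + 1 ≤ 2 * j * k := by nlinarith
    set B := 2 * j * k with hBdef
    omega
  rw [Finset.sum_congr rfl hterm, Finset.sum_const, Nat.card_Icc, smul_eq_mul]
  have h5 : (p - 1) * (d + 1) = (4 * p) * ((m + 1 - 1) * k) := by
    rw [hm, hk']
    have : m + 1 - 1 = m := by omega
    rw [this]; ring
  rw [h5, Nat.mul_div_cancel_left _ (by positivity : 0 < 4 * p)]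
end

section
/- Let p be an odd prime and suppose d > 2 satisfies d ≡ p+1 (mod 2p). Then the sum over j = 1 to (p-1)/2 of (⌊2jd/(2p)⌋ - ⌊(2j-1)d/(2p)⌋) equals (p-1)(d+p-1)/(4p). -/
/-- If d ≡ p+1 (mod 2p) then the a-number sum equals (p-1)(d+p-1)/(4p). -/
theorem stmt7 (p d : ℕ) (hp : p.Prime) (hodd : Odd p) (hd : 2 < d)
    (hcong : d % (2 * p) = p + 1) :
    ∑ j ∈ Finset.Icc 1 ((p - 1) / 2), (2 * j * d / (2 * p) - (2 * j - 1) * d / (2 * p))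
      = (p - 1) * (d + p - 1) / (4 * p) := by
  obtain ⟨m, hm⟩ := hodd
  have hp3 : 3 ≤ p := by have := hp.two_le; omega
  obtain ⟨q, hdq⟩ : ∃ q, d = 2 * p * q + p + 1 :=
    ⟨d / (2 * p), by have := Nat.div_add_mod d (2 * p); omega⟩
  have hterm : ∀ j ∈ Finset.Icc 1 ((p - 1) / 2),
      2 * j * d / (2 * p) - (2 * j - 1) * d / (2 * p) = q + 1 := by
    intro j hj
    simp only [Finset.mem_Icc] at hj
    obtain ⟨j', rfl⟩ : ∃ j', j = j' + 1 := ⟨j - 1, by omega⟩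
    have hj2 : 2 * (j' + 1) ≤ p - 1 := by omega
    have hpos : 0 < 2 * p := by omega
    have e1 : 2 * (j' + 1) - 1 = 2 * j' + 1 := by omega
    have h1 : 2 * (j' + 1) * d / (2 * p) = (j' + 1) * (2 * q + 1) := by
      have he : 2 * (j' + 1) * d = 2 * p * ((j' + 1) * (2 * q + 1)) + 2 * (j' + 1) := by
        subst hdq; ring
      rw [he, Nat.mul_add_div hpos, Nat.div_eq_of_lt (by omega), add_zero]
    have h2 : (2 * (j' + 1) - 1) * d / (2 * p) = (2 * j' + 1) * q + j' := by
      have he : (2 * (j' + 1) - 1) * d = 2 * p * ((2 * j' + 1) * q + j') + (p + 2 * j' + 1) := by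
        rw [e1]; subst hdq; ring
      rw [he, Nat.mul_add_div hpos, Nat.div_eq_of_lt (by omega), add_zero]
    rw [h1, h2]
    have : (j' + 1) * (2 * q + 1) = (2 * j' + 1) * q + j' + (q + 1) := by ring
    omega
  rw [Finset.sum_congr rfl hterm, Finset.sum_const, Nat.card_Icc]
  have hcard : (p - 1) / 2 + 1 - 1 = m := by omega
  have hrhs : (p - 1) * (d + p - 1) = 4 * p * (m * (q + 1)) := by
    have h1 : p - 1 = 2 * m := by omega
    have h2 : d + p - 1 = 2 * p * q + 2 * p := by omega
    rw [h1, h2, hm]; ring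
  rw [hcard, hrhs, Nat.mul_div_cancel_left _ (by omega : 0 < 4 * p)]
  rw [smul_eq_mul]
end

section
/- For a fixed ℓ ≥ 1 and 0 ≤ k ≤ ℓ, the number of words of length ℓ on the alphabet {f,v} having exactly k breaks (including the cyclic break at position ℓ-1) is 2·C(ℓ,k) if k is even and 0 if k is odd, where C(ℓ,k) is the binomial coefficient. -/
namespace Stmt9

def pxor (e : ℕ → Bool) : ℕ → Bool
  | 0 => false
  | n + 1 => xor (pxor e n) (e n)

def ext (l : ℕ) (hl : 1 ≤ l) (v : Fin l → Bool) (n : ℕ) : Bool :=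
  v ⟨n % l, Nat.mod_lt _ hl⟩

lemma ext_eq {l : ℕ} (hl : 1 ≤ l) (v : Fin l → Bool) {n : ℕ} (h : n < l) :
    ext l hl v n = v ⟨n, h⟩ := by
  unfold ext; congr 1; exact Fin.ext (Nat.mod_eq_of_lt h)

def der (l : ℕ) (hl : 1 ≤ l) (u : Fin l → Bool) (j : Fin l) : Bool :=
  xor (ext l hl u ((j : ℕ) + 1)) (u j)

def intg (l : ℕ) (hl : 1 ≤ l) (b : Bool) (d : Fin l → Bool) (j : Fin l) : Bool :=
  xor b (pxor (ext l hl d) (j : ℕ))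

lemma L1 : ∀ a b c : Bool, xor (xor a b) (xor c b) = xor a c := by decide
lemma L2 : ∀ b p d : Bool, xor (xor b (xor p d)) (xor b p) = d := by decide
lemma L4 : ∀ a x : Bool, xor a (xor a x) = x := by decide
lemma L5 : ∀ b p : Bool, xor (xor b false) (xor b p) = p := by decide

lemma pxor_der (l : ℕ) (hl : 1 ≤ l) (u : Fin l → Bool) :
    ∀ n, n ≤ l → pxor (ext l hl (der l hl u)) n = xor (u ⟨0, hl⟩) (ext l hl u n) := by
  intro n hn
  induction n with
  | zero =>
    rw [ext_eq hl u (show (0:ℕ) < l from hl)]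
    simp [pxor]
  | succ n ih =>
    have hn' : n < l := hn
    have he : ext l hl (der l hl u) n = xor (ext l hl u (n + 1)) (ext l hl u n) := by
      rw [ext_eq hl _ hn', ext_eq hl u hn']
      rfl
    show xor (pxor (ext l hl (der l hl u)) n) (ext l hl (der l hl u) n) = _
    rw [ih (Nat.le_of_lt hn'), he]
    exact L1 _ _ _

lemma pxor_total (l : ℕ) (hl : 1 ≤ l) (u : Fin l → Bool) :
    pxor (ext l hl (der l hl u)) l = false := by
  have h := pxor_der l hl u l le_rfl
  have h0 : ext l hl u l = u ⟨0, hl⟩ := by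
    unfold ext; congr 1; exact Fin.ext (Nat.mod_self l)
  rw [h, h0]
  exact Bool.xor_self _

lemma intg_der (l : ℕ) (hl : 1 ≤ l) (u : Fin l → Bool) :
    intg l hl (u ⟨0, hl⟩) (der l hl u) = u := by
  funext j
  show xor (u ⟨0, hl⟩) (pxor (ext l hl (der l hl u)) (j : ℕ)) = u j
  rw [pxor_der l hl u (j : ℕ) (Nat.le_of_lt j.2), L4, ext_eq hl u j.2]

lemma der_intg (l : ℕ) (hl : 1 ≤ l) (b : Bool) (d : Fin l → Bool)
    (h : pxor (ext l hl d) l = false) : der l hl (intg l hl b d) = d := by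
  funext j
  have hval : ext l hl (intg l hl b d) ((j : ℕ) + 1)
      = xor b (pxor (ext l hl d) (((j : ℕ) + 1) % l)) := rfl
  show xor (ext l hl (intg l hl b d) ((j : ℕ) + 1)) (xor b (pxor (ext l hl d) (j : ℕ))) = d j
  rw [hval]
  have hdj : ext l hl d (j : ℕ) = d j := by
    rw [ext_eq hl d j.2]
  rcases lt_or_eq_of_le (Nat.succ_le_of_lt j.2) with h1 | h1
  · have h1' : (j : ℕ) + 1 < l := h1
    rw [Nat.mod_eq_of_lt h1']
    show xor (xor b (xor (pxor (ext l hl d) (j : ℕ)) (ext l hl d (j : ℕ)))) _ = _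
    rw [hdj]; exact L2 _ _ _
  · -- j + 1 = l
    have h1' : (j : ℕ) + 1 = l := h1
    rw [h1', Nat.mod_self]
    show xor (xor b (pxor (ext l hl d) 0)) _ = _
    have hp : pxor (ext l hl d) ((j : ℕ) + 1) = false := by rw [h1']; exact h
    have hp2 : pxor (ext l hl d) (j : ℕ) = d j := by
      have : xor (pxor (ext l hl d) (j : ℕ)) (ext l hl d (j : ℕ)) = false := hp
      rw [hdj] at this
      rcases Bool.eq_false_or_eq_true (pxor (ext l hl d) (j : ℕ)) with h' | h' <;>
        rcases Bool.eq_false_or_eq_true (d j) with h'' | h'' <;>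
          simp [h', h''] at this ⊢
    show xor (xor b false) (xor b (pxor (ext l hl d) (j : ℕ))) = d j
    rw [hp2]; exact L5 _ _

lemma intg_zero (l : ℕ) (hl : 1 ≤ l) (b : Bool) (d : Fin l → Bool) :
    intg l hl b d ⟨0, hl⟩ = b := by
  show xor b (pxor (ext l hl d) 0) = b
  simp [pxor]

lemma pxor_true_iff (e : ℕ → Bool) :
    ∀ n, pxor e n = true ↔ Odd ((Finset.range n).filter (fun i => e i = true)).card := by
  intro n
  induction n with
  | zero => simp [pxor]
  | succ n ih =>
    rw [Finset.range_add_one, Finset.filter_insert]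
    by_cases h : e n = true
    · rw [if_pos h, Finset.card_insert_of_notMem (by simp)]
      show xor (pxor e n) (e n) = true ↔ _
      rw [h, Nat.odd_add_one, ← ih]
      cases pxor e n <;> simp
    · rw [if_neg h]
      show xor (pxor e n) (e n) = true ↔ _
      rw [Bool.not_eq_true] at h
      rw [h, Bool.xor_false, ih]

noncomputable def cnt (l : ℕ) (d : Fin l → Bool) : ℕ :=
  (Finset.univ.filter (fun j => d j = true)).card

lemma cnt_range (l : ℕ) (hl : 1 ≤ l) (d : Fin l → Bool) :
    ((Finset.range l).filter (fun i => ext l hl d i = true)).card = cnt l d := by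
  classical
  rw [cnt, Finset.card_filter, Finset.card_filter,
      ← Fin.sum_univ_eq_sum_range (fun i => if ext l hl d i = true then (1:ℕ) else 0) l]
  refine Finset.sum_congr rfl fun j _ => ?_
  have : ext l hl d (j : ℕ) = d j := by
    rw [ext_eq hl d j.2]
  rw [this]

lemma pxor_l_iff (l : ℕ) (hl : 1 ≤ l) (d : Fin l → Bool) :
    pxor (ext l hl d) l = false ↔ Even (cnt l d) := by
  rw [← Nat.not_odd_iff_even, ← cnt_range l hl d, ← pxor_true_iff]
  cases pxor (ext l hl d) l <;> simp

end Stmt9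

open Stmt9 in
/-- The number of words of length ℓ on {f,v} with exactly k cyclic breaks is
2·C(ℓ,k) if k is even and 0 if k is odd. -/
theorem stmt9 (l k : ℕ) (hl : 1 ≤ l) (hk : k ≤ l) :
    Nat.card {u : Fin l → Bool //
        Nat.card {j : Fin l //
          u ⟨((j : ℕ) + 1) % l, Nat.mod_lt _ (by omega)⟩ ≠ u j} = k}
      = if Even k then 2 * l.choose k else 0 := by
  classical
  have hN : ∀ u : Fin l → Bool,
      Nat.card {j : Fin l // u ⟨((j : ℕ) + 1) % l, Nat.mod_lt _ (by omega)⟩ ≠ u j}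
        = cnt l (der l hl u) := by
    intro u
    have e : {j : Fin l // u ⟨((j : ℕ) + 1) % l, Nat.mod_lt _ (by omega)⟩ ≠ u j}
        ≃ {j : Fin l // der l hl u j = true} := by
      refine Equiv.subtypeEquivRight fun j => ?_
      rw [der, Bool.xor_iff_ne]
      exact Iff.rfl
    rw [Nat.card_congr e, Nat.card_eq_fintype_card, Fintype.card_subtype]
    rfl
  have E1 : {u : Fin l → Bool //
        Nat.card {j : Fin l //
          u ⟨((j : ℕ) + 1) % l, Nat.mod_lt _ (by omega)⟩ ≠ u j} = k}
      ≃ {p : Bool × (Fin l → Bool) //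
          cnt l p.2 = k ∧ pxor (ext l hl p.2) l = false} :=
    { toFun := fun u => ⟨(u.1 ⟨0, hl⟩, der l hl u.1),
        by rw [← hN u.1]; exact u.2, pxor_total l hl u.1⟩
      invFun := fun p => ⟨intg l hl p.1.1 p.1.2,
        by rw [hN, der_intg l hl p.1.1 p.1.2 p.2.2]; exact p.2.1⟩
      left_inv := fun u => Subtype.ext (intg_der l hl u.1)
      right_inv := fun p => Subtype.ext (Prod.ext (intg_zero l hl p.1.1 p.1.2)
        (der_intg l hl p.1.1 p.1.2 p.2.2)) }
  rw [Nat.card_congr E1]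
  by_cases hke : Even k
  · rw [if_pos hke]
    have E2 : {p : Bool × (Fin l → Bool) //
          cnt l p.2 = k ∧ pxor (ext l hl p.2) l = false}
        ≃ Bool × {d : Fin l → Bool // cnt l d = k} :=
      { toFun := fun p => (p.1.1, ⟨p.1.2, p.2.1⟩)
        invFun := fun q => ⟨(q.1, q.2.1), q.2.2,
          (pxor_l_iff l hl q.2.1).2 (by rw [q.2.2]; exact hke)⟩
        left_inv := fun p => rfl
        right_inv := fun q => rfl }
    have E3 : {d : Fin l → Bool // cnt l d = k} ≃ {s : Finset (Fin l) // s.card = k} :=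
      { toFun := fun d => ⟨Finset.univ.filter (fun j => d.1 j = true), d.2⟩
        invFun := fun s => ⟨fun j => decide (j ∈ s.1), by
          have : Finset.univ.filter (fun j => decide (j ∈ s.1) = true) = s.1 := by
            ext j; simp
          rw [cnt, this]; exact s.2⟩
        left_inv := fun d => Subtype.ext (by funext j; simp)
        right_inv := fun s => Subtype.ext (by ext j; simp) }
    rw [Nat.card_congr (E2.trans (Equiv.prodCongrRight fun _ => E3)),
        Nat.card_prod, Nat.card_eq_fintype_card, Nat.card_eq_fintype_card,
        Fintype.card_finset_len, Fintype.card_fin, Fintype.card_bool]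
  · rw [if_neg hke]
    have : IsEmpty {p : Bool × (Fin l → Bool) //
        cnt l p.2 = k ∧ pxor (ext l hl p.2) l = false} := by
      refine ⟨fun p => hke ?_⟩
      rw [← p.2.1]
      exact (pxor_l_iff l hl p.1.2).1 p.2.2
    exact Nat.card_of_isEmpty
end

section
/- Let p be an odd prime, λ ≥ 1, and d = p^λ + 1. The map sending (b_1,...,b_λ) with b_j ∈ {0,...,p-1}, not all equal to (p-1)/2, to the residue of 1 + Σ_{j=1}^λ b_j p^{j-1} modulo d, is a bijection onto S = (Z/dZ) \ {0, d/2}. Moreover, under this bijection, multiplication by p on S corresponds to (b_1,...,b_λ) ↦ (p-1-b_λ, b_1, ..., b_{λ-1}). -/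
open Finset

lemma digit_sum_lt (p : ℕ) (hp : 1 ≤ p) :
    ∀ (l : ℕ) (b : ℕ → ℕ), (∀ j < l, b j < p) → ∑ j ∈ range l, b j * p ^ j < p ^ l := by
  intro l
  induction l with
  | zero => intro b _; simp
  | succ n ih =>
    intro b hb
    rw [Finset.sum_range_succ, pow_succ]
    have h1 := ih b (fun j hj => hb j (Nat.lt_succ_of_lt hj))
    have h2 : b n ≤ p - 1 := by have := hb n (Nat.lt_succ_self n); omega
    have h3 : b n * p ^ n ≤ (p - 1) * p ^ n := Nat.mul_le_mul_right _ h2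
    have h4 : (p - 1) * p ^ n + p ^ n = p ^ n * p := by
      have : (p - 1 + 1) * p ^ n = p * p ^ n := by rw [Nat.sub_add_cancel hp]
      nlinarith [this]
    omega

lemma shift_sum (p : ℕ) (n : ℕ) (b : ℕ → ℕ) :
    ∑ j ∈ range (n+1), b j * p ^ j
      = (∑ j ∈ range n, b (j+1) * p ^ j) * p + b 0 := by
  rw [Finset.sum_range_succ' (fun j => b j * p ^ j), Finset.sum_mul]
  congr 1
  · apply Finset.sum_congr rfl; intro j _; rw [pow_succ]; ring
  · simp

lemma digit_extract (p : ℕ) (hp : 2 ≤ p) :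
    ∀ (l : ℕ) (b : ℕ → ℕ), (∀ j < l, b j < p) →
      ∀ k < l, (∑ j ∈ range l, b j * p ^ j) / p ^ k % p = b k := by
  intro l
  induction l with
  | zero => intro b _ k hk; omega
  | succ n ih =>
    intro b hb k hk
    rw [shift_sum]
    have hb0 : b 0 < p := hb 0 (by omega)
    cases k with
    | zero =>
      rw [pow_zero, Nat.div_one, add_comm, Nat.add_mul_mod_self_right,
        Nat.mod_eq_of_lt hb0]
    | succ k =>
      have hdiv : ((∑ j ∈ range n, b (j+1) * p ^ j) * p + b 0) / p ^ (k+1)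
          = (∑ j ∈ range n, b (j+1) * p ^ j) / p ^ k := by
        rw [pow_succ, mul_comm (p ^ k) p, ← Nat.div_div_eq_div_mul,
          mul_comm _ p, Nat.mul_add_div (by omega : 0 < p),
          Nat.div_eq_of_lt hb0, Nat.add_zero]
      rw [hdiv]
      exact ih (fun j => b (j+1)) (fun j hj => hb (j+1) (by omega)) k (by omega)

lemma digit_recon (p : ℕ) (hp : 2 ≤ p) :
    ∀ (l m : ℕ), m < p ^ l → ∑ j ∈ range l, (m / p ^ j % p) * p ^ j = m := by
  intro l
  induction l with
  | zero =>
    intro m hm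
    have hm0 : m = 0 := by simpa using hm
    simp [hm0]
  | succ n ih =>
    intro m hm
    rw [shift_sum]
    have h1 : ∀ j, m / p ^ (j+1) = (m / p) / p ^ j := by
      intro j; rw [pow_succ, mul_comm, Nat.div_div_eq_div_mul]
    have h2 : (∑ j ∈ range n, (m / p ^ (j+1) % p) * p ^ j) = m / p := by
      have hmp : m / p < p ^ n := by
        rw [Nat.div_lt_iff_lt_mul (by omega : 0 < p)]
        calc m < p ^ (n+1) := hm
        _ = p ^ n * p := pow_succ p n
      calc (∑ j ∈ range n, (m / p ^ (j+1) % p) * p ^ j)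
          = ∑ j ∈ range n, ((m / p) / p ^ j % p) * p ^ j := by
            apply Finset.sum_congr rfl; intro j _; rw [h1]
        _ = m / p := ih (m / p) hmp
    rw [h2, pow_zero, Nat.div_one, mul_comm, Nat.div_add_mod]

lemma geo_sum (p : ℕ) (hp : 1 ≤ p) :
    ∀ l : ℕ, ∑ j ∈ range l, (p - 1) * p ^ j = p ^ l - 1 := by
  intro l
  induction l with
  | zero => simp
  | succ n ih =>
    rw [Finset.sum_range_succ, ih]
    have h1 : (p - 1 + 1) * p ^ n = p * p ^ n := by rw [Nat.sub_add_cancel hp]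
    have h2 : 1 ≤ p ^ n := Nat.one_le_pow _ _ hp
    have h3 : p ^ (n+1) = p * p ^ n := pow_succ' p n
    have h5 : (p - 1 + 1) * p ^ n = (p - 1) * p ^ n + p ^ n := by ring
    omega



/-- In the Hermitian case d = p^λ + 1, the map (b_1,…,b_λ) ↦ 1 + Σ b_j p^{j-1}
is a bijection from the set of digit tuples (not all (p-1)/2) onto
S = Z/dZ \ {0, d/2}, and multiplication by p corresponds to
(b_1,…,b_λ) ↦ (p-1-b_λ, b_1, …, b_{λ-1}).  Digit tuples are encoded as
functions b : ℕ → ℕ supported on {0,…,λ-1}, with b j standing for b_{j+1}. -/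
theorem stmt14 (p l : ℕ) (hp : p.Prime) (hodd : Odd p) (hl : 1 ≤ l) :
    let d := p ^ l + 1
    let D : Set (ℕ → ℕ) :=
      {b | (∀ j < l, b j < p) ∧ (∀ j, l ≤ j → b j = 0) ∧ ¬ (∀ j < l, b j = (p - 1) / 2)}
    Set.BijOn
      (fun b : ℕ → ℕ => ((1 + ∑ j ∈ Finset.range l, b j * p ^ j : ℕ) : ZMod d))
      D {a : ZMod d | a ≠ 0 ∧ a ≠ ((d / 2 : ℕ) : ZMod d)} ∧
    ∀ b ∈ D, ∀ c ∈ D,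
      c 0 = p - 1 - b (l - 1) → (∀ j, 1 ≤ j → j < l → c j = b (j - 1)) →
      ((1 + ∑ j ∈ Finset.range l, c j * p ^ j : ℕ) : ZMod d)
        = (p : ZMod d) * ((1 + ∑ j ∈ Finset.range l, b j * p ^ j : ℕ) : ZMod d) := by
  intro d D
  have hp2 : 2 ≤ p := hp.two_le
  have hd : d = p ^ l + 1 := rfl
  obtain ⟨k, hk⟩ : Odd (p ^ l) := hodd.pow
  have hkd : d = 2 * k + 2 := by omega
  haveI : NeZero d := ⟨by omega⟩
  obtain ⟨m0, hm0⟩ := hodd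
  set q : ℕ := (p - 1) / 2 with hq
  have hqm : q = m0 := by omega
  have hqp : q < p := by omega
  -- sum of q's
  have hhalfsum : ∑ j ∈ range l, q * p ^ j = k := by
    have h2 : 2 * ∑ j ∈ range l, q * p ^ j = ∑ j ∈ range l, (p - 1) * p ^ j := by
      rw [Finset.mul_sum]
      apply Finset.sum_congr rfl
      intro j _; rw [← mul_assoc]; congr 1; omega
    rw [geo_sum p (by omega) l] at h2
    omega
  have hdhalf : d / 2 = k + 1 := by omega
  -- key equality tools
  have cast_inj : ∀ m n : ℕ, m < d → n < d → (m : ZMod d) = (n : ZMod d) → m = n := by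
    intro m n hm hn h
    have := (ZMod.natCast_eq_natCast_iff m n d).mp h
    unfold Nat.ModEq at this
    rwa [Nat.mod_eq_of_lt hm, Nat.mod_eq_of_lt hn] at this
  constructor
  · refine ⟨?_, ?_, ?_⟩
    · -- MapsTo
      rintro b ⟨hb1, hb2, hb3⟩
      have hS : ∑ j ∈ range l, b j * p ^ j < p ^ l := digit_sum_lt p (by omega) l b hb1
      constructor
      · intro h0
        have : ((1 + ∑ j ∈ range l, b j * p ^ j : ℕ) : ZMod d) = ((0 : ℕ) : ZMod d) := by
          simpa using h0
        have := cast_inj _ _ (by omega) (by omega) this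
        omega
      · intro h0
        have heq : 1 + ∑ j ∈ range l, b j * p ^ j = d / 2 :=
          cast_inj _ _ (by omega) (by omega : d / 2 < d) h0
        apply hb3
        intro j hj
        have hsum : ∑ j ∈ range l, b j * p ^ j = ∑ j ∈ range l, q * p ^ j := by omega
        have e1 := digit_extract p hp2 l b hb1 j hj
        have e2 : (∑ i ∈ range l, q * p ^ i) / p ^ j % p = q :=
          digit_extract p hp2 l (fun _ => q) (fun _ _ => hqp) j hj
        rw [hsum] at e1
        rw [e1] at e2
        omega
    · -- InjOn
      rintro b ⟨hb1, hb2, _⟩ b' ⟨hb1', hb2', _⟩ heq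
      have hS : ∑ j ∈ range l, b j * p ^ j < p ^ l := digit_sum_lt p (by omega) l b hb1
      have hS' : ∑ j ∈ range l, b' j * p ^ j < p ^ l := digit_sum_lt p (by omega) l b' hb1'
      have h := cast_inj _ _ (by omega) (by omega) heq
      have hsum : ∑ j ∈ range l, b j * p ^ j = ∑ j ∈ range l, b' j * p ^ j := by omega
      funext j
      by_cases hj : j < l
      · have e1 := digit_extract p hp2 l b hb1 j hj
        have e2 := digit_extract p hp2 l b' hb1' j hj
        rw [hsum] at e1; omega
      · rw [hb2 j (by omega), hb2' j (by omega)]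
    · -- SurjOn
      rintro a ⟨ha0, hahalf⟩
      set n : ℕ := a.val with hn
      have hnd : n < d := ZMod.val_lt a
      have hna : (n : ZMod d) = a := ZMod.natCast_zmod_val a
      have hn0 : n ≠ 0 := by
        intro h; apply ha0; rw [← hna, h, Nat.cast_zero]
      set m : ℕ := n - 1 with hm
      have hmlt : m < p ^ l := by omega
      refine ⟨fun j => if j < l then m / p ^ j % p else 0, ⟨?_, ?_, ?_⟩, ?_⟩
      · intro j hj; simp only [if_pos hj]; exact Nat.mod_lt _ (by omega)
      · intro j hj; simp only [if_neg (by omega : ¬ j < l)]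
      · intro hall
        apply hahalf
        have : ∀ j < l, m / p ^ j % p = q := by
          intro j hj; have := hall j hj; simpa [if_pos hj] using this
        have hrec := digit_recon p hp2 l m hmlt
        have hsum : ∑ j ∈ range l, (m / p ^ j % p) * p ^ j
            = ∑ j ∈ range l, q * p ^ j := by
          apply Finset.sum_congr rfl
          intro j hj; rw [this j (Finset.mem_range.mp hj)]
        rw [hsum, hhalfsum] at hrec
        rw [← hna]
        congr 1
        omega
      · simp only
        have hsum : ∑ j ∈ range l, (if j < l then m / p ^ j % p else 0) * p ^ j
            = ∑ j ∈ range l, (m / p ^ j % p) * p ^ j := by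
          apply Finset.sum_congr rfl
          intro j hj; rw [if_pos (Finset.mem_range.mp hj)]
        rw [hsum, digit_recon p hp2 l m hmlt, ← hna]
        congr 1
        omega
  · -- multiplication by p
    rintro b ⟨hb1, hb2, _⟩ c ⟨hc1, hc2, _⟩ h0 hj
    obtain ⟨n, rfl⟩ : ∃ n, l = n + 1 := ⟨l - 1, by omega⟩
    have hbm : b n < p := hb1 n (by omega)
    have hcsum : ∑ j ∈ range (n+1), c j * p ^ j
        = (∑ j ∈ range n, b j * p ^ j) * p + (p - 1 - b n) := by
      have hcb : ∑ j ∈ range n, c (j+1) * p ^ j = ∑ j ∈ range n, b j * p ^ j := by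
        apply Finset.sum_congr rfl
        intro j hjr
        have hjn := Finset.mem_range.mp hjr
        have hcj := hj (j+1) (by omega) (by omega)
        simp only [Nat.add_sub_cancel] at hcj
        rw [hcj]
      rw [shift_sum, hcb, h0]
      simp
    have hbsum : ∑ j ∈ range (n+1), b j * p ^ j
        = ∑ j ∈ range n, b j * p ^ j + b n * p ^ n := Finset.sum_range_succ _ _
    set T : ℕ := ∑ j ∈ range n, b j * p ^ j with hT
    have key : (1 + ∑ j ∈ range (n+1), c j * p ^ j) + b n * d
        = p * (1 + ∑ j ∈ range (n+1), b j * p ^ j) := by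
      rw [hcsum, hbsum, hd]
      have h1 : p ^ (n+1) = p * p ^ n := pow_succ' p n
      zify [show b n ≤ p - 1 by omega, show 1 ≤ p by omega]
      ring
    calc ((1 + ∑ j ∈ range (n+1), c j * p ^ j : ℕ) : ZMod d)
        = (((1 + ∑ j ∈ range (n+1), c j * p ^ j) + b n * d : ℕ) : ZMod d) := by
          simp [Nat.cast_add, Nat.cast_mul, ZMod.natCast_self]
      _ = ((p * (1 + ∑ j ∈ range (n+1), b j * p ^ j) : ℕ) : ZMod d) := by rw [key]
      _ = (p : ZMod d) * ((1 + ∑ j ∈ range (n+1), b j * p ^ j : ℕ) : ZMod d) := by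
          push_cast; ring
end
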